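/- For every natural number i ≥ 0 and every x ∈ [0,1], ∫_{[0,1]³} 1{ξ₂ < min(ξ₁, ξ₃, x)} (x^i + ξ₂^i + 2ξ₁^i) dξ₁dξ₂dξ₃ = x^{i+1}·[ (x²/3 − x + 1) + (x²/(i+3) − 2x/(i+2) + 1/(i+1)) + (2x/(i+1))·(x/(i+3) − 1/(i+2)) ] + x(2−x)/(i+1). -/

import Mathlib

/-!
Integrating out `ξ₃` turns the constraint `ξ₂ < ξ₃` into the weight `1 - ξ₂`, integrating out `ξ₂`
then leaves a polynomial in `ξ₁` and `m = min ξ₁ x`, and splitting the `ξ₁`-integral at `x`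
makes `m` equal to `ξ₁` on `[0, x]` and to `x` on `[x, 1]`. What remains are integrals of
monomials.
-/

open MeasureTheory Set

section IntervalIntegralIte

variable {a b m : ℝ}

theorem integral_ite_lt_of_mem_Icc (g : ℝ → ℝ) (hm : m ∈ Icc a b) :
    ∫ t in a..b, (if t < m then g t else 0) = ∫ t in a..m, g t := by
  have hcut : Ioc a b ∩ Iio m = Ioo a m := by
    ext t; simp only [mem_inter_iff, mem_Ioc, mem_Iio, mem_Ioo]; constructor <;> grind [hm.2]
  rw [intervalIntegral.integral_of_le (hm.1.trans hm.2), intervalIntegral.integral_of_le hm.1,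
    integral_Ioc_eq_integral_Ioo (y := m), ← hcut, ← setIntegral_indicator measurableSet_Iio]
  rfl

theorem integral_ite_gt_of_mem_Icc (g : ℝ → ℝ) (hm : m ∈ Icc a b) :
    ∫ t in a..b, (if m < t then g t else 0) = ∫ t in m..b, g t := by
  have hcut : Ioc a b ∩ Ioi m = Ioc m b := by rw [Ioc_inter_Ioi, sup_of_le_right hm.1]
  rw [intervalIntegral.integral_of_le (hm.1.trans hm.2), intervalIntegral.integral_of_le hm.2,
    ← hcut, ← setIntegral_indicator measurableSet_Ioi]
  rfl

theorem integral_ite_lt_min_of_mem_Icc {s : ℝ} (F : ℝ) (hs : s ∈ Icc a b) :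
    ∫ t in a..b, (if s < min t m then F else 0) = if s < m then F * (b - s) else 0 := by
  by_cases hsm : s < m
  · simp only [lt_min_iff, hsm, and_true, if_true]
    rw [integral_ite_gt_of_mem_Icc (fun _ => F) hs, intervalIntegral.integral_const, smul_eq_mul,
      mul_comm]
  · simp [hsm]

theorem integral_integral_ite_lt_min_min (f : ℝ → ℝ) {u v : ℝ} (huv : min u v ∈ Icc a b) :
    ∫ s in a..b, ∫ t in a..b, (if s < min u (min t v) then f s else 0)
      = ∫ s in a..min u v, f s * (b - s) := by
  rw [← integral_ite_lt_of_mem_Icc _ huv]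
  refine intervalIntegral.integral_congr fun s hs => ?_
  rw [uIcc_of_le (huv.1.trans huv.2)] at hs
  simp only [min_left_comm u, integral_ite_lt_min_of_mem_Icc _ hs]

theorem integral_comp_min_of_mem_Icc {c : ℝ} (f : ℝ → ℝ → ℝ)
    (hf : IntervalIntegrable (fun t => f t (min t c)) volume a b) (hc : c ∈ Icc a b) :
    ∫ t in a..b, f t (min t c) = (∫ t in a..c, f t t) + ∫ t in c..b, f t c := by
  have hac : uIcc a c ⊆ uIcc a b := uIcc_subset_uIcc_left (Icc_subset_uIcc hc)
  have hcb : uIcc c b ⊆ uIcc a b := uIcc_subset_uIcc_right (Icc_subset_uIcc hc)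
  rw [← intervalIntegral.integral_add_adjacent_intervals (hf.mono_set hac) (hf.mono_set hcb)]
  congr 1
  · refine intervalIntegral.integral_congr fun t ht => ?_
    rw [uIcc_of_le hc.1] at ht
    simp only [min_eq_left ht.2]
  · refine intervalIntegral.integral_congr fun t ht => ?_
    rw [uIcc_of_le hc.2] at ht
    simp only [min_eq_right ht.1]

end IntervalIntegralIte

theorem integral_add_pow_mul_one_sub (c m : ℝ) (n : ℕ) :
    ∫ t in (0 : ℝ)..m, (c + t ^ n) * (1 - t)
      = c * m - c * m ^ 2 / 2 + m ^ (n + 1) / (n + 1) - m ^ (n + 2) / (n + 2) := by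
  -- `t ^ 1` rather than `t`: simp cannot match `r * ?f t` against `c * t`.
  have hpoly : (fun t : ℝ => (c + t ^ n) * (1 - t))
      = fun t => c - c * t ^ 1 + t ^ n - t ^ (n + 1) := by
    funext t; ring
  rw [hpoly]
  simp (disch := exact Continuous.intervalIntegrable (by fun_prop) _ _) only
    [intervalIntegral.integral_sub, intervalIntegral.integral_add,
      intervalIntegral.integral_const_mul, integral_pow, intervalIntegral.integral_const]
  push_cast
  ring

theorem bs_monomial_transition_integral (i : ℕ) (x : ℝ) (hx : x ∈ Set.Icc (0 : ℝ) 1) :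
    (∫ ξ₁ in (0:ℝ)..1, ∫ ξ₂ in (0:ℝ)..1, ∫ ξ₃ in (0:ℝ)..1,
        (if ξ₂ < min ξ₁ (min ξ₃ x) then x ^ i + ξ₂ ^ i + 2 * ξ₁ ^ i else 0))
      = x ^ (i + 1) *
          ((x ^ 2 / 3 - x + 1)
            + (x ^ 2 / ((i : ℝ) + 3) - 2 * x / ((i : ℝ) + 2) + 1 / ((i : ℝ) + 1))
            + (2 * x / ((i : ℝ) + 1)) * (x / ((i : ℝ) + 3) - 1 / ((i : ℝ) + 2)))
        + x * (2 - x) / ((i : ℝ) + 1) := by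
  set Q : ℝ → ℝ → ℝ := fun s m => (x ^ i + 2 * s ^ i) * m - (x ^ i + 2 * s ^ i) * m ^ 2 / 2
    + m ^ (i + 1) / (i + 1) - m ^ (i + 2) / (i + 2) with hQ
  have hinner : ∀ ξ₁ ∈ uIcc (0 : ℝ) 1, (∫ ξ₂ in (0:ℝ)..1, ∫ ξ₃ in (0:ℝ)..1,
      (if ξ₂ < min ξ₁ (min ξ₃ x) then x ^ i + ξ₂ ^ i + 2 * ξ₁ ^ i else 0)) = Q ξ₁ (min ξ₁ x) := by
    intro ξ₁ hξ₁
    rw [uIcc_of_le zero_le_one] at hξ₁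
    simp only [hQ]
    rw [integral_integral_ite_lt_min_min _ ⟨le_min hξ₁.1 hx.1, min_le_of_left_le hξ₁.2⟩,
      ← integral_add_pow_mul_one_sub]
    exact intervalIntegral.integral_congr fun ξ₂ _ => by ring
  have hdiag : (fun s => Q s s) = fun s => x ^ i * s ^ 1 - x ^ i / 2 * s ^ 2
      + (2 + 1 / (i + 1)) * s ^ (i + 1) - (1 + 1 / (i + 2)) * s ^ (i + 2) := by
    funext s; simp only [hQ]; ring
  have htail : (fun s => Q s x) = fun s =>
      (x ^ i * (x - x ^ 2 / 2) + x ^ (i + 1) / (i + 1) - x ^ (i + 2) / (i + 2))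
        + 2 * (x - x ^ 2 / 2) * s ^ i := by
    funext s; simp only [hQ]; ring
  rw [intervalIntegral.integral_congr hinner,
    integral_comp_min_of_mem_Icc Q (Continuous.intervalIntegrable (by fun_prop) _ _) hx,
    hdiag, htail]
  simp (disch := exact Continuous.intervalIntegrable (by fun_prop) _ _) only
    [intervalIntegral.integral_sub, intervalIntegral.integral_add,
      intervalIntegral.integral_const_mul, integral_pow, intervalIntegral.integral_const]
  push_cast
  ring_nf
  field_simp
  ring
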